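/- KKT sufficiency: suppose X ∈ S^n_+ ∩ P, s ∈ Q, A(X) = b, B(X) = s, and there exist y, ȳ, S, Z, v with A*(y) + B*(ȳ) + S + Z = C, ȳ = v, S ∈ S^n_+, ⟨S, X⟩ = 0, X = Π_P(X - Z), and s = Π_Q(s - v). Then X is optimal for (P) and (y, ȳ, S, Z, v) is optimal for (D), and the optimal values coincide: ⟨C, X⟩ = ⟨b, y⟩ - δ*_P(-Z) - δ*_Q(-v). -/

import Mathlib

/-!
A nearest point `x` of a convex set `K` to `u` satisfies `⟨u - x, w - x⟩ ≤ 0` for all `w ∈ K`: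
otherwise moving from `x` a little towards `w` would decrease the distance to `u`. Hence
`X = Π_P(X - Z)` and `s = Π_Q(s - v)` say that the support functions `δ*_P(-Z)` and `δ*_Q(-v)`
are attained at `X` and `s`. Pairing the dual equation with a primal-feasible `X'` gives
`⟨C, X'⟩ = ⟨b, y'⟩ + ⟨v', B X'⟩ + ⟨S', X'⟩ + ⟨Z', X'⟩`, and `⟨S', X'⟩ ≥ 0` for positive
semidefinite `S', X'` yields weak duality; at the KKT point complementarity `⟨S, X⟩ = 0`
closes the gap.
-/

open scoped BigOperators

/-- Trace inner product on matrices. -/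
noncomputable def mip {n : ℕ} (X Y : Matrix (Fin n) (Fin n) ℝ) : ℝ :=
  Matrix.trace (X * Y)

/-- Support function of a set of matrices, valued in `EReal`. -/
noncomputable def suppFn {n : ℕ} (P : Set (Matrix (Fin n) (Fin n) ℝ))
    (W : Matrix (Fin n) (Fin n) ℝ) : EReal :=
  sSup ((fun M => ((mip W M : ℝ) : EReal)) '' P)

/-- Support function of a set of vectors, valued in `EReal`. -/
noncomputable def suppFnVec {p : ℕ} (Q : Set (Fin p → ℝ)) (w : Fin p → ℝ) : EReal :=
  sSup ((fun q => ((∑ i, w i * q i : ℝ) : EReal)) '' Q)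

open Filter Topology Matrix

lemma nonpos_of_forall_le_mul {a c : ℝ} (h : ∀ t ∈ Set.Ioc (0 : ℝ) 1, a ≤ t * c) : a ≤ 0 := by
  have hlim : Tendsto (fun t : ℝ => t * c) (𝓝[>] 0) (𝓝 0) := by
    simpa using ((continuous_mul_const c).tendsto 0).mono_left nhdsWithin_le_nhds
  exact ge_of_tendsto hlim (eventually_of_mem (Ioc_mem_nhdsGT one_pos) h)

theorem LinearMap.apply_sub_nonpos_of_isMinOn {E : Type*} [AddCommGroup E] [Module ℝ E]
    (B : E →ₗ[ℝ] E →ₗ[ℝ] ℝ) (hB : ∀ x y, B x y = B y x) {K : Set E} (hK : Convex ℝ K)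
    {u x w : E} (hx : x ∈ K) (hw : w ∈ K) (hmin : IsMinOn (fun w => B (u - w) (u - w)) K x) :
    B (u - x) (w - x) ≤ 0 := by
  refine nonpos_of_forall_le_mul (c := B (w - x) (w - x) / 2) fun t ⟨ht0, ht1⟩ => ?_
  have hseg : x + t • (w - x) ∈ K := by
    convert hK hx hw (by linarith : 0 ≤ 1 - t) ht0.le (by ring) using 1
    module
  have hexp : ∀ d e : E, B (d - t • e) (d - t • e) = B d d - 2 * t * B d e + t ^ 2 * B e e := by
    intro d e
    simp only [map_sub, map_smul, LinearMap.sub_apply, LinearMap.smul_apply, smul_eq_mul, hB e d]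
    ring
  have hle := isMinOn_iff.mp hmin _ hseg
  rw [show u - (x + t • (w - x)) = (u - x) - t • (w - x) by abel, hexp] at hle
  nlinarith

section Mip

variable {n : ℕ}

noncomputable def mipBilin (n : ℕ) :
    Matrix (Fin n) (Fin n) ℝ →ₗ[ℝ] Matrix (Fin n) (Fin n) ℝ →ₗ[ℝ] ℝ :=
  (LinearMap.mul ℝ _).compr₂ (Matrix.traceLinearMap (Fin n) ℝ ℝ)

@[simp] lemma mipBilin_apply (X Y : Matrix (Fin n) (Fin n) ℝ) : mipBilin n X Y = mip X Y := rfl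

lemma mip_comm (X Y : Matrix (Fin n) (Fin n) ℝ) : mip X Y = mip Y X :=
  Matrix.trace_mul_comm X Y

lemma mip_add_left (X Y W : Matrix (Fin n) (Fin n) ℝ) : mip (X + Y) W = mip X W + mip Y W :=
  LinearMap.map_add₂ (mipBilin n) X Y W

lemma mip_neg_left (X W : Matrix (Fin n) (Fin n) ℝ) : mip (-X) W = -mip X W :=
  LinearMap.map_neg₂ (mipBilin n) X W

open scoped MatrixOrder in
lemma mip_nonneg_of_posSemidef {S X : Matrix (Fin n) (Fin n) ℝ} (hS : S.PosSemidef)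
    (hX : X.PosSemidef) : 0 ≤ mip S X := by
  obtain ⟨R, rfl⟩ := CStarAlgebra.nonneg_iff_eq_star_mul_self.mp hS.nonneg
  rw [mip, Matrix.star_eq_conjTranspose, Matrix.mul_assoc, Matrix.trace_mul_comm]
  exact (hX.mul_mul_conjTranspose_same R).trace_nonneg

end Mip

section SupportFunction

variable {n p : ℕ}

lemma mip_le_suppFn {P : Set (Matrix (Fin n) (Fin n) ℝ)} {X : Matrix (Fin n) (Fin n) ℝ}
    (hX : X ∈ P) (W : Matrix (Fin n) (Fin n) ℝ) : ((mip W X : ℝ) : EReal) ≤ suppFn P W :=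
  le_sSup ⟨X, hX, rfl⟩

lemma suppFn_eq_of_forall_mip_le {P : Set (Matrix (Fin n) (Fin n) ℝ)}
    {W X : Matrix (Fin n) (Fin n) ℝ} (hX : X ∈ P) (h : ∀ M ∈ P, mip W M ≤ mip W X) :
    suppFn P W = mip W X :=
  IsGreatest.csSup_eq ⟨⟨X, hX, rfl⟩, by rintro _ ⟨M, hM, rfl⟩; exact EReal.coe_le_coe (h M hM)⟩

lemma dotProduct_le_suppFnVec {Q : Set (Fin p → ℝ)} {q : Fin p → ℝ} (hq : q ∈ Q)
    (w : Fin p → ℝ) : ((w ⬝ᵥ q : ℝ) : EReal) ≤ suppFnVec Q w :=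
  le_sSup ⟨q, hq, rfl⟩

lemma suppFnVec_eq_of_forall_dotProduct_le {Q : Set (Fin p → ℝ)} {w s : Fin p → ℝ}
    (hs : s ∈ Q) (h : ∀ q ∈ Q, w ⬝ᵥ q ≤ w ⬝ᵥ s) : suppFnVec Q w = w ⬝ᵥ s :=
  IsGreatest.csSup_eq ⟨⟨s, hs, rfl⟩, by rintro _ ⟨q, hq, rfl⟩; exact EReal.coe_le_coe (h q hq)⟩

/-- If `X = Π_P(X - Z)`, then `-Z` is a normal vector of `P` at `X`, so `δ*_P(-Z) = ⟨-Z, X⟩`. -/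
lemma suppFn_neg_eq_of_isMinOn {P : Set (Matrix (Fin n) (Fin n) ℝ)}
    {X Z : Matrix (Fin n) (Fin n) ℝ} (hP : Convex ℝ P) (hX : X ∈ P)
    (hproj : IsMinOn (fun W => mip ((X - Z) - W) ((X - Z) - W)) P X) :
    suppFn P (-Z) = mip (-Z) X :=
  suppFn_eq_of_forall_mip_le hX fun W hW => by
    have h := (mipBilin n).apply_sub_nonpos_of_isMinOn mip_comm hP hX hW hproj
    rw [sub_sub_cancel_left, map_sub] at h
    simp only [mipBilin_apply] at h
    linarith

lemma suppFnVec_neg_eq_of_isMinOn {Q : Set (Fin p → ℝ)} {s v : Fin p → ℝ} (hQ : Convex ℝ Q)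
    (hs : s ∈ Q) (hproj : IsMinOn (fun q => ((s - v) - q) ⬝ᵥ ((s - v) - q)) Q s) :
    suppFnVec Q (-v) = (-v) ⬝ᵥ s :=
  suppFnVec_eq_of_forall_dotProduct_le hs fun q hq => by
    have h := (dotProductBilin ℝ ℝ).apply_sub_nonpos_of_isMinOn dotProduct_comm hQ hs hq hproj
    rw [sub_sub_cancel_left, map_sub] at h
    simp only [dotProductBilin_apply_apply] at h
    linarith

end SupportFunction

section WeakDuality

variable {n m p : ℕ} (A : Matrix (Fin n) (Fin n) ℝ → Fin m → ℝ)
  (B : Matrix (Fin n) (Fin n) ℝ → Fin p → ℝ) (Astar : (Fin m → ℝ) → Matrix (Fin n) (Fin n) ℝ)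
  (Bstar : (Fin p → ℝ) → Matrix (Fin n) (Fin n) ℝ)

lemma mip_eq_of_dual_feasible (hAadj : ∀ y X, mip (Astar y) X = y ⬝ᵥ A X)
    (hBadj : ∀ w X, mip (Bstar w) X = w ⬝ᵥ B X) {C X S Z : Matrix (Fin n) (Fin n) ℝ}
    {b y : Fin m → ℝ} {v : Fin p → ℝ} (hAX : A X = b) (hdual : Astar y + Bstar v + S + Z = C) :
    mip C X = b ⬝ᵥ y + v ⬝ᵥ B X + mip S X + mip Z X := by
  rw [← hdual, mip_add_left, mip_add_left, mip_add_left, hAadj, hBadj, hAX, dotProduct_comm]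

lemma neg_mip_le_dual_objective (hAadj : ∀ y X, mip (Astar y) X = y ⬝ᵥ A X)
    (hBadj : ∀ w X, mip (Bstar w) X = w ⬝ᵥ B X) {P : Set (Matrix (Fin n) (Fin n) ℝ)}
    {Q : Set (Fin p → ℝ)} {C X S Z : Matrix (Fin n) (Fin n) ℝ} {b y : Fin m → ℝ}
    {v : Fin p → ℝ} (hX : X.PosSemidef) (hXP : X ∈ P) (hBXQ : B X ∈ Q) (hAX : A X = b)
    (hdual : Astar y + Bstar v + S + Z = C) (hS : S.PosSemidef) :
    ((-mip C X : ℝ) : EReal) ≤ suppFn P (-Z) + suppFnVec Q (-v) + ((-(b ⬝ᵥ y) : ℝ) : EReal) := by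
  have hC := mip_eq_of_dual_feasible A B Astar Bstar hAadj hBadj hAX hdual
  have hSX := mip_nonneg_of_posSemidef hS hX
  calc ((-mip C X : ℝ) : EReal)
      ≤ ((mip (-Z) X : ℝ) : EReal) + (((-v) ⬝ᵥ B X : ℝ) : EReal) + ((-(b ⬝ᵥ y) : ℝ) : EReal) := by
        rw [mip_neg_left, neg_dotProduct]
        exact_mod_cast (by linarith)
    _ ≤ suppFn P (-Z) + suppFnVec Q (-v) + ((-(b ⬝ᵥ y) : ℝ) : EReal) :=
        add_le_add (add_le_add (mip_le_suppFn hXP _) (dotProduct_le_suppFnVec hBXQ _)) le_rfl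

end WeakDuality

theorem stmt17_general {n m p : ℕ}
    (A : Matrix (Fin n) (Fin n) ℝ →ₗ[ℝ] (Fin m → ℝ))
    (B : Matrix (Fin n) (Fin n) ℝ →ₗ[ℝ] (Fin p → ℝ))
    (Astar : (Fin m → ℝ) →ₗ[ℝ] Matrix (Fin n) (Fin n) ℝ)
    (Bstar : (Fin p → ℝ) →ₗ[ℝ] Matrix (Fin n) (Fin n) ℝ)
    (hAadj : ∀ (y : Fin m → ℝ) (X : Matrix (Fin n) (Fin n) ℝ),
      mip (Astar y) X = ∑ i, y i * A X i)
    (hBadj : ∀ (w : Fin p → ℝ) (X : Matrix (Fin n) (Fin n) ℝ),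
      mip (Bstar w) X = ∑ i, w i * B X i)
    (P : Set (Matrix (Fin n) (Fin n) ℝ)) (Q : Set (Fin p → ℝ))
    (hPconv : Convex ℝ P)
    (hQconv : Convex ℝ Q)
    (C X S Z : Matrix (Fin n) (Fin n) ℝ) (b : Fin m → ℝ) (y : Fin m → ℝ)
    (s v ybar : Fin p → ℝ)
    (hXpsd : X.PosSemidef) (hXP : X ∈ P) (hsQ : s ∈ Q)
    (hAX : A X = b) (hBX : B X = s)
    (hdual : Astar y + Bstar ybar + S + Z = C) (hyv : ybar = v)
    (hSpsd : S.PosSemidef) (hcomp : mip S X = 0)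
    -- `X = Π_P(X - Z)`: `X` is the metric projection of `X - Z` onto `P`
    (hprojP : ∀ W ∈ P, mip ((X - Z) - X) ((X - Z) - X) ≤ mip ((X - Z) - W) ((X - Z) - W))
    -- `s = Π_Q(s - v)`: `s` is the metric projection of `s - v` onto `Q`
    (hprojQ : ∀ q ∈ Q, (∑ i, ((s - v) - s) i * ((s - v) - s) i)
        ≤ ∑ i, ((s - v) - q) i * ((s - v) - q) i) :
    -- primal optimality of `X`
    (∀ (X' : Matrix (Fin n) (Fin n) ℝ) (s' : Fin p → ℝ),
      X'.PosSemidef → X' ∈ P → s' ∈ Q → A X' = b → B X' = s' → mip C X ≤ mip C X') ∧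
    -- dual optimality of `(y, ȳ, S, Z, v)`
    (∀ (y' : Fin m → ℝ) (ybar' v' : Fin p → ℝ) (S' Z' : Matrix (Fin n) (Fin n) ℝ),
      Astar y' + Bstar ybar' + S' + Z' = C → ybar' = v' → S'.PosSemidef →
      suppFn P (-Z) + suppFnVec Q (-v) + ((-(∑ i, b i * y i) : ℝ) : EReal)
        ≤ suppFn P (-Z') + suppFnVec Q (-v') + ((-(∑ i, b i * y' i) : ℝ) : EReal)) ∧
    -- equality of the optimal values: `⟨C, X⟩ = ⟨b, y⟩ - δ*_P(-Z) - δ*_Q(-v)`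
    ((mip C X : ℝ) : EReal) + suppFn P (-Z) + suppFnVec Q (-v)
      = (((∑ i, b i * y i) : ℝ) : EReal) := by
  subst hyv hBX
  have hsuppP : suppFn P (-Z) = mip (-Z) X :=
    suppFn_neg_eq_of_isMinOn hPconv hXP (isMinOn_iff.mpr hprojP)
  have hsuppQ : suppFnVec Q (-ybar) = (-ybar) ⬝ᵥ B X :=
    suppFnVec_neg_eq_of_isMinOn hQconv hsQ (isMinOn_iff.mpr hprojQ)
  have hgap : mip C X + mip (-Z) X + (-ybar) ⬝ᵥ B X = b ⬝ᵥ y := by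
    have := mip_eq_of_dual_feasible A B Astar Bstar hAadj hBadj hAX hdual
    rw [mip_neg_left, neg_dotProduct]
    linarith
  have hval : suppFn P (-Z) + suppFnVec Q (-ybar) + ((-(b ⬝ᵥ y) : ℝ) : EReal)
      = ((-mip C X : ℝ) : EReal) := by
    rw [hsuppP, hsuppQ]
    exact_mod_cast (by linarith)
  refine ⟨fun X' s' hX' hX'P hs'Q hAX' hBX' => ?_, fun y' ybar' v' S' Z' hdual' hyv' hS' => ?_, ?_⟩
  · subst hBX'
    have h := neg_mip_le_dual_objective A B Astar Bstar hAadj hBadj hX' hX'P hs'Q hAX' hdual hSpsd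
    rw [hval, EReal.coe_le_coe_iff] at h
    linarith
  · subst hyv'
    exact hval ▸ neg_mip_le_dual_objective A B Astar Bstar hAadj hBadj hXpsd hXP hsQ hAX hdual' hS'
  · rw [hsuppP, hsuppQ]
    exact_mod_cast hgap

/-- KKT sufficiency: if `X ∈ 𝕊ⁿ₊ ∩ P`, `s ∈ Q`, `A X = b`, `B X = s`, and
`(y, ȳ, S, Z, v)` satisfies `A*(y) + B*(ȳ) + S + Z = C`, `ȳ = v`, `S ⪰ 0`, `⟨S, X⟩ = 0`,
`X = Π_P(X - Z)` and `s = Π_Q(s - v)`, then `X` is optimal for (P), `(y, ȳ, S, Z, v)` is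
optimal for (D), and `⟨C, X⟩ = ⟨b, y⟩ - δ*_P(-Z) - δ*_Q(-v)` (stated additively in
`EReal`). -/
theorem stmt17 {n m p : ℕ}
    (A : Matrix (Fin n) (Fin n) ℝ →ₗ[ℝ] (Fin m → ℝ))
    (B : Matrix (Fin n) (Fin n) ℝ →ₗ[ℝ] (Fin p → ℝ))
    (Astar : (Fin m → ℝ) →ₗ[ℝ] Matrix (Fin n) (Fin n) ℝ)
    (Bstar : (Fin p → ℝ) →ₗ[ℝ] Matrix (Fin n) (Fin n) ℝ)
    (hAadj : ∀ (y : Fin m → ℝ) (X : Matrix (Fin n) (Fin n) ℝ),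
      mip (Astar y) X = ∑ i, y i * A X i)
    (hBadj : ∀ (w : Fin p → ℝ) (X : Matrix (Fin n) (Fin n) ℝ),
      mip (Bstar w) X = ∑ i, w i * B X i)
    (P : Set (Matrix (Fin n) (Fin n) ℝ)) (Q : Set (Fin p → ℝ))
    (hPne : P.Nonempty) (hPclosed : IsClosed P) (hPconv : Convex ℝ P)
    (hQne : Q.Nonempty) (hQclosed : IsClosed Q) (hQconv : Convex ℝ Q)
    (C X S Z : Matrix (Fin n) (Fin n) ℝ) (b : Fin m → ℝ) (y : Fin m → ℝ)
    (s v ybar : Fin p → ℝ)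
    (hXpsd : X.PosSemidef) (hXP : X ∈ P) (hsQ : s ∈ Q)
    (hAX : A X = b) (hBX : B X = s)
    (hdual : Astar y + Bstar ybar + S + Z = C) (hyv : ybar = v)
    (hSpsd : S.PosSemidef) (hcomp : mip S X = 0)
    -- `X = Π_P(X - Z)`: `X` is the metric projection of `X - Z` onto `P`
    (hprojP : ∀ W ∈ P, mip ((X - Z) - X) ((X - Z) - X) ≤ mip ((X - Z) - W) ((X - Z) - W))
    -- `s = Π_Q(s - v)`: `s` is the metric projection of `s - v` onto `Q`
    (hprojQ : ∀ q ∈ Q, (∑ i, ((s - v) - s) i * ((s - v) - s) i)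
        ≤ ∑ i, ((s - v) - q) i * ((s - v) - q) i) :
    -- primal optimality of `X`
    (∀ (X' : Matrix (Fin n) (Fin n) ℝ) (s' : Fin p → ℝ),
      X'.PosSemidef → X' ∈ P → s' ∈ Q → A X' = b → B X' = s' → mip C X ≤ mip C X') ∧
    -- dual optimality of `(y, ȳ, S, Z, v)`
    (∀ (y' : Fin m → ℝ) (ybar' v' : Fin p → ℝ) (S' Z' : Matrix (Fin n) (Fin n) ℝ),
      Astar y' + Bstar ybar' + S' + Z' = C → ybar' = v' → S'.PosSemidef →
      suppFn P (-Z) + suppFnVec Q (-v) + ((-(∑ i, b i * y i) : ℝ) : EReal)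
        ≤ suppFn P (-Z') + suppFnVec Q (-v') + ((-(∑ i, b i * y' i) : ℝ) : EReal)) ∧
    -- equality of the optimal values: `⟨C, X⟩ = ⟨b, y⟩ - δ*_P(-Z) - δ*_Q(-v)`
    ((mip C X : ℝ) : EReal) + suppFn P (-Z) + suppFnVec Q (-v)
      = (((∑ i, b i * y i) : ℝ) : EReal) :=
  stmt17_general A B Astar Bstar hAadj hBadj P Q hPconv hQconv C X S Z b y s v ybar hXpsd hXP hsQ
    hAX hBX hdual hyv hSpsd hcomp hprojP hprojQ
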